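/- arXiv:2508.07303 — 2 statements merged into one kernel-verified Lean document; each statement's English description precedes it below -/
import Mathlib

section
/- If a_1, a_2, ..., a_n are integers with |a_i| ≥ 3 for all i, then the value of the continued fraction [0; a_1, ..., a_n] = 1/(a_1 + 1/(a_2 + ... + 1/a_n)) has absolute value at most (3 - √5)/2, and in particular strictly less than 1/2. -/
/-- The continued fraction value `[c₁; c₂, …, cₙ] = c₁ + 1/(c₂ + 1/(⋯ + 1/cₙ))`.
With this definition, `[0; a₁, …, aₙ] = 1 / cfrac [a₁, …, aₙ]`. -/
noncomputable def cfrac : List ℤ → ℝ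
  | [] => 0
  | a :: l => a + 1 / cfrac l

/-!
The bound `d = (3 - √5)/2` is the fixed point of `t ↦ 1/(3 - t)`, i.e. `d + 1/d = 3`.
Hence `|y| ≤ d` and `|a| ≥ 3` give `|a + y| ≥ 3 - d = 1/d`, so `|1/(a + y)| ≤ d`,
and induction on the list propagates `|[0; a₁, …, aₙ]| ≤ d`, starting from `[0;] = 0`.
-/

lemma abs_one_div_add_le {K : Type*} [Field K] [LinearOrder K] [IsStrictOrderedRing K]
    {a y d : K} (hd : 0 < d) (hy : |y| ≤ d) (ha : d + d⁻¹ ≤ |a|) :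
    |1 / (a + y)| ≤ d := by
  have hsum : d⁻¹ ≤ |a + y| :=
    calc d⁻¹ = (d + d⁻¹) - d := by ring
      _ ≤ |a| - |y| := by gcongr
      _ ≤ |a + y| := abs_sub_abs_le_abs_add a y
  rw [abs_div, abs_one, one_div_le ((inv_pos.2 hd).trans_le hsum) hd, one_div]
  exact hsum

lemma three_sub_sqrt_five_div_two_pos : 0 < (3 - √5) / 2 := by
  have : √5 < 3 := (Real.sqrt_lt' (by norm_num)).2 (by norm_num)
  linarith

lemma three_sub_sqrt_five_div_two_lt_one_half : (3 - √5) / 2 < 1 / 2 := by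
  have : 2 < √5 := (Real.lt_sqrt (by norm_num)).2 (by norm_num)
  linarith

lemma three_sub_sqrt_five_div_two_add_inv : (3 - √5) / 2 + ((3 - √5) / 2)⁻¹ = 3 := by
  have hsq : √5 ^ 2 = 5 := Real.sq_sqrt (by norm_num)
  have hinv : ((3 - √5) / 2)⁻¹ = (3 + √5) / 2 :=
    inv_eq_of_mul_eq_one_right (by linear_combination -hsq / 4)
  rw [hinv]
  ring

lemma abs_one_div_cfrac_le (l : List ℤ) (h : ∀ a ∈ l, 3 ≤ |a|) :
    |1 / cfrac l| ≤ (3 - √5) / 2 := by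
  induction l with
  | nil => simpa [cfrac] using three_sub_sqrt_five_div_two_pos.le
  | cons a l ih =>
    rw [List.forall_mem_cons] at h
    refine abs_one_div_add_le three_sub_sqrt_five_div_two_pos (ih h.2) ?_
    rw [three_sub_sqrt_five_div_two_add_inv, ← Int.cast_abs]
    exact_mod_cast h.1

theorem abs_cfrac_zero_le_general (l : List ℤ)
    (h : ∀ a ∈ l, 3 ≤ |a|) :
    |1 / cfrac l| ≤ (3 - Real.sqrt 5) / 2 ∧ |1 / cfrac l| < 1 / 2 := by
  have hle := abs_one_div_cfrac_le l h
  exact ⟨hle, hle.trans_lt three_sub_sqrt_five_div_two_lt_one_half⟩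

/-- If all partial denominators satisfy `|aᵢ| ≥ 3`, then the continued fraction
`[0; a₁, …, aₙ]` has absolute value at most `(3 - √5)/2`, and in particular
strictly less than `1/2`. -/
theorem abs_cfrac_zero_le (l : List ℤ) (hl : l ≠ [])
    (h : ∀ a ∈ l, 3 ≤ |a|) :
    |1 / cfrac l| ≤ (3 - Real.sqrt 5) / 2 ∧ |1 / cfrac l| < 1 / 2 :=
  abs_cfrac_zero_le_general l h
end

section
/- If [a_0; a_1, ..., a_n] = [b_0; b_1, ..., b_m] are two continued fraction expansions of the same rational number with all |a_i| ≥ 3 and all |b_j| ≥ 3, then n = m and a_i = b_i for all 0 ≤ i ≤ n. -/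
section ThreeLeAbs

variable {l : List ℤ}

theorem two_lt_abs_cfrac (hl : ∀ x ∈ l, 3 ≤ |x|) (hne : l ≠ []) : 2 < |cfrac l| := by
  induction l with
  | nil => exact absurd rfl hne
  | cons a t ih =>
    have ha : (3 : ℝ) ≤ |(a : ℝ)| := by exact_mod_cast hl a List.mem_cons_self
    have htail : |1 / cfrac t| ≤ 1 / 2 := by
      rcases eq_or_ne t [] with rfl | ht
      · norm_num [cfrac]
      · have := ih (fun x hx => hl x (List.mem_cons_of_mem a hx)) ht
        rw [abs_one_div]
        exact div_le_div_of_nonneg_left zero_le_one two_pos this.le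
    calc (2 : ℝ) < |(a : ℝ)| - |1 / cfrac t| := by linarith
      _ ≤ |(a : ℝ) + 1 / cfrac t| := abs_sub_abs_le_abs_add _ _
      _ = |cfrac (a :: t)| := rfl

theorem abs_one_div_cfrac_lt_half (hl : ∀ x ∈ l, 3 ≤ |x|) : |1 / cfrac l| < 1 / 2 := by
  rcases eq_or_ne l [] with rfl | hne
  · norm_num [cfrac]
  · rw [abs_one_div]
    exact one_div_lt_one_div_of_lt two_pos (two_lt_abs_cfrac hl hne)

theorem cfrac_eq_zero_iff (hl : ∀ x ∈ l, 3 ≤ |x|) : cfrac l = 0 ↔ l = [] := by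
  refine ⟨fun h0 => by_contra fun hne => ?_, fun h => h ▸ rfl⟩
  have := two_lt_abs_cfrac hl hne
  rw [h0, abs_zero] at this
  norm_num at this

theorem round_cfrac_cons (a : ℤ) (hl : ∀ x ∈ l, 3 ≤ |x|) : round (cfrac (a :: l)) = a := by
  have hfrac := abs_lt.mp (abs_one_div_cfrac_lt_half hl)
  rw [cfrac, round_intCast_add, round_eq_zero_iff.mpr ⟨hfrac.1.le, hfrac.2⟩, add_zero]

theorem cfrac_injOn_three_le_abs : Set.InjOn cfrac {l | ∀ x ∈ l, 3 ≤ |x|} := by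
  intro l₁ h₁ l₂ h₂ h
  induction l₁ generalizing l₂ with
  | nil => exact ((cfrac_eq_zero_iff h₂).mp h.symm).symm
  | cons a t₁ ih =>
    cases l₂ with
    | nil => exact (cfrac_eq_zero_iff h₁).mp h
    | cons b t₂ =>
      have ht₁ : ∀ x ∈ t₁, 3 ≤ |x| := fun x hx => h₁ x (List.mem_cons_of_mem a hx)
      have ht₂ : ∀ x ∈ t₂, 3 ≤ |x| := fun x hx => h₂ x (List.mem_cons_of_mem b hx)
      have hab : a = b := by
        rw [← round_cfrac_cons a ht₁, ← round_cfrac_cons b ht₂, h]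
      subst hab
      have htail : cfrac t₁ = cfrac t₂ := by
        simpa only [cfrac, add_right_inj, one_div, inv_inj] using h
      rw [ih ht₁ ht₂ htail]

end ThreeLeAbs

theorem cfrac_unique_general (a b : List ℤ)
    (ha : ∀ x ∈ a, 3 ≤ |x|) (hb : ∀ x ∈ b, 3 ≤ |x|)
    (h : cfrac a = cfrac b) : a = b :=
  cfrac_injOn_three_le_abs ha hb h

/-- Uniqueness of continued fraction expansions with all partial quotients of
absolute value at least 3: if `[a₀; a₁, …, aₙ] = [b₀; b₁, …, b_m]` with all
`|aᵢ| ≥ 3` and all `|bⱼ| ≥ 3`, then `n = m` and `aᵢ = bᵢ` for all `i`. -/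
theorem cfrac_unique (a b : List ℤ) (ha0 : a ≠ []) (hb0 : b ≠ [])
    (ha : ∀ x ∈ a, 3 ≤ |x|) (hb : ∀ x ∈ b, 3 ≤ |x|)
    (h : cfrac a = cfrac b) : a = b :=
  cfrac_unique_general a b ha hb h
end
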